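/- arXiv:2101.05168 — 2 statements merged into one kernel-verified Lean document; each statement's English description precedes it below -/
import Mathlib

section
/- There exists a constant c > 0 such that for all x, b ∈ [0,∞), all τ ∈ ℝ, and all t ∈ ℝ with t ≠ 0, the kernel ℓ satisfies |ℓ(τ; x, t, b)| ≤ c |t|^{−1/2}. -/
/-!
Write the integrand as `e^{-kx} · e^{i(k²t - kτ)}`. The amplitude `e^{-kx}` is nonnegative,
decreasing and equal to `1` at `k = 0`, so integrating by parts against a primitive of the phase
factor (Bonnet's form of the second mean value theorem) bounds `ℓ` by the supremum of the partial
integrals `∫_r^s e^{i(k²t - kτ)} dk`. Completing the square turns these into partial integrals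
of `e^{itu²}`. On `|u| ≤ |t|^{-1/2}` the trivial bound gives `|t|^{-1/2}`; beyond that, van der
Corput's first derivative test (the same integration by parts, now with amplitude `1/u`) gives
`1/(|t| · |t|^{-1/2}) = |t|^{-1/2}`.
-/

open MeasureTheory Complex

/-- The kernel of the representation `ℓ(τ; x, t, b) = ∫₀^b e^{−kx + i(k²t − kτ)} dk`. -/
noncomputable def kernelL (τ x t b : ℝ) : ℂ :=
  ∫ k in (0:ℝ)..b,
    Complex.exp (-(k : ℂ) * (x : ℂ) + Complex.I * ((k : ℂ) ^ 2 * (t : ℂ) - (k : ℂ) * (τ : ℂ)))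

open Real Set

theorem norm_integral_smul_le_of_antitone {E : Type*} [NormedAddCommGroup E] [NormedSpace ℝ E]
    [CompleteSpace E] {ψ ψ' : ℝ → ℝ} {g : ℝ → E} {a b M : ℝ}
    (hab : a ≤ b) (hψ : ∀ k ∈ Icc a b, HasDerivAt ψ (ψ' k) k)
    (hψ'_int : IntervalIntegrable ψ' volume a b) (hψ'_nonpos : ∀ k ∈ Icc a b, ψ' k ≤ 0)
    (hψb : 0 ≤ ψ b) (hg : Continuous g) (hG : ∀ y ∈ Icc a b, ‖∫ k in a..y, g k‖ ≤ M) :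
    ‖∫ k in a..b, ψ k • g k‖ ≤ M * ψ a := by
  rw [← uIcc_of_le hab] at hψ hψ'_nonpos hG
  set G : ℝ → E := fun y ↦ ∫ k in a..y, g k
  have hparts : ∫ k in a..b, ψ k • g k = ψ b • G b - ψ a • G a - ∫ k in a..b, ψ' k • G k :=
    intervalIntegral.integral_smul_deriv_eq_deriv_smul hψ
      (fun y _ ↦ (hg.integral_hasStrictDerivAt a y).hasDerivAt) hψ'_int (hg.intervalIntegrable a b)
  have hrest : ‖∫ k in a..b, ψ' k • G k‖ ≤ M * (ψ a - ψ b) := calc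
    _ ≤ ∫ k in a..b, -ψ' k * M := by
      refine intervalIntegral.norm_integral_le_of_norm_le hab (ae_of_all _ fun k hk ↦ ?_)
        (hψ'_int.neg.mul_const M)
      have hk' : k ∈ uIcc a b := uIoc_subset_uIcc (uIoc_of_le hab ▸ hk)
      rw [norm_smul, Real.norm_of_nonpos (hψ'_nonpos k hk')]
      exact mul_le_mul_of_nonneg_left (hG k hk') (neg_nonneg.2 (hψ'_nonpos k hk'))
    _ = M * (ψ a - ψ b) := by
      rw [intervalIntegral.integral_mul_const, intervalIntegral.integral_neg,
        intervalIntegral.integral_eq_sub_of_hasDerivAt hψ hψ'_int]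
      ring
  calc ‖∫ k in a..b, ψ k • g k‖ = ‖ψ b • G b - ∫ k in a..b, ψ' k • G k‖ := by
        rw [hparts, show G a = 0 from intervalIntegral.integral_same, smul_zero, sub_zero]
    _ ≤ ψ b * M + M * (ψ a - ψ b) := by
      refine norm_sub_le_of_le ?_ hrest
      rw [norm_smul, Real.norm_of_nonneg hψb]
      exact mul_le_mul_of_nonneg_left (hG b right_mem_uIcc) hψb
    _ = M * ψ a := by ring

theorem hasDerivAt_cexp_mul_sq_mul_I (t u : ℝ) :
    HasDerivAt (fun u : ℝ ↦ cexp (↑(t * u ^ 2) * I))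
      (cexp (↑(t * u ^ 2) * I) * (↑(2 * t * u) * I)) u := by
  convert ((((hasDerivAt_pow 2 u).const_mul t).ofReal_comp).mul_const I).cexp using 3
  push_cast
  ring

section QuadraticPhase

variable {t : ℝ}

theorem norm_integral_cexp_mul_sq_mul_I_le_of_pos (ht : t ≠ 0) {a b : ℝ} (ha : 0 < a)
    (hab : a ≤ b) :
    ‖∫ u in a..b, cexp (↑(t * u ^ 2) * I)‖ ≤ (|t| * a)⁻¹ := by
  have hab' : Icc a b ⊆ Ioi 0 := fun u hu ↦ ha.trans_le hu.1
  -- `u • e^{itu²}` is an exact derivative and the amplitude `u⁻¹` decreases.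
  have hsplit : ∀ u ∈ uIcc a b,
      cexp (↑(t * u ^ 2) * I) = u⁻¹ • (u • cexp (↑(t * u ^ 2) * I)) :=
    fun u hu ↦ (inv_smul_smul₀ (hab' (uIcc_of_le hab ▸ hu)).ne' _).symm
  have hprim : ∀ y, ‖∫ u in a..y, u • cexp (↑(t * u ^ 2) * I)‖ ≤ |t|⁻¹ := by
    intro y
    have hint : ∫ u in a..y, u • cexp (↑(t * u ^ 2) * I)
        = (2 * t * I)⁻¹ * (cexp (↑(t * y ^ 2) * I) - cexp (↑(t * a ^ 2) * I)) := by
      rw [← intervalIntegral.integral_eq_sub_of_hasDerivAt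
        (fun u _ ↦ hasDerivAt_cexp_mul_sq_mul_I t u) ((by fun_prop : Continuous
          fun u : ℝ ↦ cexp (↑(t * u ^ 2) * I) * (↑(2 * t * u) * I)).intervalIntegrable _ _),
        ← intervalIntegral.integral_const_mul]
      congr 1 with u
      have : (t : ℂ) ≠ 0 := ofReal_ne_zero.2 ht
      rw [real_smul]
      field_simp
      push_cast
      ring
    have hdiff : ‖cexp (↑(t * y ^ 2) * I) - cexp (↑(t * a ^ 2) * I)‖ ≤ 2 :=
      (norm_sub_le _ _).trans (by rw [norm_exp_ofReal_mul_I, norm_exp_ofReal_mul_I]; norm_num)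
    calc _ = (2 * |t|)⁻¹ * ‖cexp (↑(t * y ^ 2) * I) - cexp (↑(t * a ^ 2) * I)‖ := by
          rw [hint, norm_mul]; simp
      _ ≤ (2 * |t|)⁻¹ * 2 := by gcongr
      _ = |t|⁻¹ := by field_simp
  rw [intervalIntegral.integral_congr hsplit]
  calc _ ≤ |t|⁻¹ * a⁻¹ := norm_integral_smul_le_of_antitone hab
        (fun u hu ↦ hasDerivAt_inv (hab' hu).ne')
        (ContinuousOn.intervalIntegrable ((continuousOn_pow 2).inv₀
          fun u hu ↦ pow_ne_zero 2 (hab' (uIcc_of_le hab ▸ hu)).ne').neg)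
        (fun u _ ↦ neg_nonpos.2 (inv_nonneg.2 (sq_nonneg u))) (inv_nonneg.2 (ha.le.trans hab))
        (by fun_prop) (fun y _ ↦ hprim y)
    _ = (|t| * a)⁻¹ := (mul_inv _ _).symm

theorem norm_integral_zero_cexp_mul_sq_mul_I_le_of_nonneg (ht : t ≠ 0) {y : ℝ} (hy : 0 ≤ y) :
    ‖∫ u in 0..y, cexp (↑(t * u ^ 2) * I)‖ ≤ 2 * (√|t|)⁻¹ := by
  have hs : 0 < √|t| := sqrt_pos.2 (abs_pos.2 ht)
  set δ := (√|t|)⁻¹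
  have hδ : 0 < δ := inv_pos.2 hs
  have hnear : ∀ z, 0 ≤ z → z ≤ δ → ‖∫ u in 0..z, cexp (↑(t * u ^ 2) * I)‖ ≤ δ := fun z hz hzδ ↦
    (intervalIntegral.norm_integral_le_of_norm_le_const fun _ _ ↦
      (norm_exp_ofReal_mul_I _).le).trans (by rwa [one_mul, sub_zero, abs_of_nonneg hz])
  rcases le_total y δ with hyδ | hδy
  · linarith [hnear y hy hyδ]
  have hc : Continuous fun u : ℝ ↦ cexp (↑(t * u ^ 2) * I) := by fun_prop
  have hfar : (|t| * δ)⁻¹ = δ := by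
    simp only [δ]
    nth_rw 1 [← mul_self_sqrt (abs_nonneg t)]
    field_simp
  rw [← intervalIntegral.integral_add_adjacent_intervals (hc.intervalIntegrable 0 δ)
    (hc.intervalIntegrable δ y)]
  calc _ ≤ δ + (|t| * δ)⁻¹ := norm_add_le_of_le (hnear δ hδ.le le_rfl)
        (norm_integral_cexp_mul_sq_mul_I_le_of_pos ht hδ hδy)
    _ = 2 * δ := by rw [hfar]; ring

theorem norm_integral_zero_cexp_mul_sq_mul_I_le (ht : t ≠ 0) (y : ℝ) :
    ‖∫ u in 0..y, cexp (↑(t * u ^ 2) * I)‖ ≤ 2 * (√|t|)⁻¹ := by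
  rcases le_total 0 y with hy | hy
  · exact norm_integral_zero_cexp_mul_sq_mul_I_le_of_nonneg ht hy
  have heven : ∫ u in 0..y, cexp (↑(t * u ^ 2) * I)
      = -∫ u in 0..-y, cexp (↑(t * u ^ 2) * I) := by
    have h := intervalIntegral.integral_comp_neg (a := 0) (b := y)
      fun u ↦ cexp (↑(t * u ^ 2) * I)
    simp only [neg_sq, neg_zero] at h
    rw [h, intervalIntegral.integral_symm]
  rw [heven, norm_neg]
  exact norm_integral_zero_cexp_mul_sq_mul_I_le_of_nonneg ht (neg_nonneg.2 hy)

theorem norm_integral_cexp_mul_sq_mul_I_le (ht : t ≠ 0) (r s : ℝ) :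
    ‖∫ u in r..s, cexp (↑(t * u ^ 2) * I)‖ ≤ 4 * (√|t|)⁻¹ := by
  have hc : Continuous fun u : ℝ ↦ cexp (↑(t * u ^ 2) * I) := by fun_prop
  rw [← intervalIntegral.integral_interval_sub_left (hc.intervalIntegrable 0 s)
    (hc.intervalIntegrable 0 r)]
  linarith [norm_sub_le_of_le (norm_integral_zero_cexp_mul_sq_mul_I_le ht s)
    (norm_integral_zero_cexp_mul_sq_mul_I_le ht r)]

theorem norm_integral_cexp_quadratic_mul_I_le (ht : t ≠ 0) (τ r s : ℝ) :
    ‖∫ k in r..s, cexp (↑(k ^ 2 * t - k * τ) * I)‖ ≤ 4 * (√|t|)⁻¹ := by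
  have hsquare : ∀ k : ℝ, cexp (↑(k ^ 2 * t - k * τ) * I)
      = cexp (((-(τ ^ 2 / (4 * t)) : ℝ) : ℂ) * I)
        * cexp (((t * (k - τ / (2 * t)) ^ 2 : ℝ) : ℂ) * I) := by
    intro k
    rw [← Complex.exp_add]
    congr 1
    have : (t : ℂ) ≠ 0 := ofReal_ne_zero.2 ht
    push_cast
    field_simp
    ring
  simp_rw [hsquare]
  have hshift : ∫ k in r..s, cexp (((t * (k - τ / (2 * t)) ^ 2 : ℝ) : ℂ) * I)
      = ∫ u in r - τ / (2 * t)..s - τ / (2 * t), cexp (↑(t * u ^ 2) * I) :=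
    intervalIntegral.integral_comp_sub_right (fun u ↦ cexp (↑(t * u ^ 2) * I)) _
  rw [intervalIntegral.integral_const_mul, norm_mul, norm_exp_ofReal_mul_I, one_mul, hshift]
  exact norm_integral_cexp_mul_sq_mul_I_le ht _ _

end QuadraticPhase

/-- Dispersive estimate for the kernel of the representation: `|ℓ(τ;x,t,b)| ≤ c |t|^{-1/2}`
uniformly in `x, b ∈ [0,∞)` and `τ ∈ ℝ`. -/
theorem kernel_dispersive_estimate :
    ∃ c : ℝ, 0 < c ∧ ∀ x b τ t : ℝ, 0 ≤ x → 0 ≤ b → t ≠ 0 →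
      ‖kernelL τ x t b‖ ≤ c * |t| ^ (-(1 / 2) : ℝ) := by
  refine ⟨4, by norm_num, fun x b τ t hx hb ht ↦ ?_⟩
  have hfactor : kernelL τ x t b
      = ∫ k in (0 : ℝ)..b, rexp (-(k * x)) • cexp (↑(k ^ 2 * t - k * τ) * I) := by
    refine intervalIntegral.integral_congr fun k _ ↦ ?_
    rw [real_smul, ofReal_exp, ← Complex.exp_add]
    push_cast
    ring_nf
  have hdecay : ∀ k, HasDerivAt (fun k ↦ rexp (-(k * x))) (rexp (-(k * x)) * -x) k := fun k ↦
    ((hasDerivAt_id k).mul_const x).neg.exp.congr_deriv (by simp)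
  have hdecay_nonpos : ∀ k, rexp (-(k * x)) * -x ≤ 0 := fun k ↦
    mul_nonpos_of_nonneg_of_nonpos (exp_pos _).le (neg_nonpos.2 hx)
  rw [hfactor, rpow_neg (abs_nonneg t), ← sqrt_eq_rpow]
  simpa using norm_integral_smul_le_of_antitone hb (fun k _ ↦ hdecay k)
    ((by fun_prop : Continuous fun k ↦ rexp (-(k * x)) * -x).intervalIntegrable _ _)
    (fun k _ ↦ hdecay_nonpos k) (exp_pos _).le (by fun_prop)
    (fun y _ ↦ norm_integral_cexp_quadratic_mul_I_le ht τ 0 y)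
end

section
/- There exists a constant c > 0 such that for every such H₁ and every t ≠ 0, sup_{x ≥ 0} |u₁(x,t)| ≤ c |t|^{−1/2} ‖H₁‖_{L¹(ℝ)}. -/
/-
For `x > 0` Fubini turns `u₁(x,t)` into `∫ K(τ) H₁(τ) dτ` with kernel
`K(τ) = ∫₀^∞ e^{-xk} e^{i(tk² - τk)} dk`, so it suffices to bound `K` by `4 |t|^{-1/2}`
uniformly in `x > 0` and `τ`. Completing the square, the partial integrals
`∫_0^v e^{i(tk² - τk)} dk` are increments of the Fresnel integral `∫ e^{its²} ds`, bounded by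
`4 |t|^{-1/2}`: the part of the path with `|s| ≤ |t|^{-1/2}` is bounded by its length, and the
rest by one integration by parts. Integrating by parts against the decreasing weight `e^{-xk}`,
whose total variation is `1`, transfers this bound to `K`. At `x = 0` Fubini is not available,
but `u₁` is continuous in `x ≥ 0` by dominated convergence (dominating function `|Ĥ₁|`).
-/

open MeasureTheory Complex

/-- Fourier transform with the convention `ĥ(k) = ∫_ℝ e^{−ikτ} h(τ) dτ`. -/
noncomputable def fourierT (h : ℝ → ℂ) (k : ℝ) : ℂ :=
  ∫ τ : ℝ, Complex.exp (-(Complex.I * (k : ℂ) * (τ : ℂ))) * h τ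

/-- `u₁(x,t) = ∫₀^∞ e^{−kx + ik²t} Ĥ₁(k) dk`. -/
noncomputable def uOne (H₁ : ℝ → ℂ) (x t : ℝ) : ℂ :=
  ∫ k in Set.Ioi (0:ℝ),
    Complex.exp (-(k : ℂ) * (x : ℂ) + Complex.I * (k : ℂ) ^ 2 * (t : ℂ)) * fourierT H₁ k


open MeasureTheory Complex Set Real Filter Topology Interval FourierTransform

lemma hasDerivAt_cexp_mul_sq_div {t s : ℝ} (ht : t ≠ 0) (hs : s ≠ 0) :
    HasDerivAt (fun s : ℝ => cexp ((t * s ^ 2 : ℝ) * I) / ((2 * t * s : ℝ) * I))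
      (cexp ((t * s ^ 2 : ℝ) * I) - cexp ((t * s ^ 2 : ℝ) * I) / ((2 * t * s ^ 2 : ℝ) * I)) s := by
  have hphase : HasDerivAt (fun s : ℝ => ((t * s ^ 2 : ℝ) : ℂ) * I) ((2 * t * s : ℝ) * I) s :=
    (((hasDerivAt_pow 2 s).const_mul t).ofReal_comp.mul_const I).congr_deriv (by push_cast; ring)
  have hden : HasDerivAt (fun s : ℝ => ((2 * t * s : ℝ) : ℂ) * I) ((2 * t : ℝ) * I) s :=
    ((((hasDerivAt_id s).const_mul (2 * t)).ofReal_comp).mul_const I).congr_deriv (by simp)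
  have hne : ((2 * t * s : ℝ) : ℂ) * I ≠ 0 :=
    mul_ne_zero (by exact_mod_cast (by positivity : 2 * t * s ≠ 0)) I_ne_zero
  refine (hphase.cexp.div hden hne).congr_deriv ?_
  have htC : (t : ℂ) ≠ 0 := by exact_mod_cast ht
  have hsC : (s : ℂ) ≠ 0 := by exact_mod_cast hs
  push_cast
  field_simp

lemma norm_integral_cexp_mul_sq_le_inv {t u v : ℝ} (ht : t ≠ 0) (hu : 0 < u) (huv : u ≤ v) :
    ‖∫ s in u..v, cexp ((t * s ^ 2 : ℝ) * I)‖ ≤ (|t| * u)⁻¹ := by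
  set e : ℝ → ℂ := fun s => cexp ((t * s ^ 2 : ℝ) * I)
  set Φ : ℝ → ℂ := fun s => e s / ((2 * t * s : ℝ) * I)
  set r : ℝ → ℂ := fun s => e s / ((2 * t * s ^ 2 : ℝ) * I)
  have hpos : ∀ s ∈ [[u, v]], 0 < s := fun s hs =>
    hu.trans_le (by rw [uIcc_of_le huv] at hs; exact hs.1)
  have hr_cont : ContinuousOn r [[u, v]] := by
    refine (by fun_prop : Continuous e).continuousOn.div (by fun_prop) fun s hs => ?_
    exact mul_ne_zero (by exact_mod_cast (by have := hpos s hs; positivity)) I_ne_zero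
  have hΦ' : ∫ s in u..v, (e s - r s) = Φ v - Φ u :=
    intervalIntegral.integral_eq_sub_of_hasDerivAt
      (fun s hs => hasDerivAt_cexp_mul_sq_div ht (hpos s hs).ne')
      (((by fun_prop : Continuous e).continuousOn.sub hr_cont).intervalIntegrable)
  have hnormΦ : ∀ s, 0 < s → ‖Φ s‖ = (2 * |t| * s)⁻¹ := by
    intro s hs
    simp only [Φ, e, norm_div, norm_exp_ofReal_mul_I, norm_mul, norm_I, norm_real]
    simp [abs_of_pos hs]
  have hnormr : ∀ s, 0 < s → ‖r s‖ = (2 * |t|)⁻¹ * s ^ (-2 : ℤ) := by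
    intro s hs
    simp only [r, e, norm_div, norm_exp_ofReal_mul_I, norm_mul, norm_I, norm_real]
    simp [abs_of_pos hs, zpow_neg]
    ring
  have hr_int : ‖∫ s in u..v, r s‖ ≤ (2 * |t|)⁻¹ * (u⁻¹ - v⁻¹) := by
    have h0 : (0 : ℝ) ∉ [[u, v]] := fun h => (hpos 0 h).false
    calc ‖∫ s in u..v, r s‖ ≤ ∫ s in u..v, (2 * |t|)⁻¹ * s ^ (-2 : ℤ) := by
          refine intervalIntegral.norm_integral_le_of_norm_le huv ?_ ?_
          · exact Eventually.of_forall fun s hs => (hnormr s (hu.trans hs.1)).le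
          · exact (intervalIntegral.intervalIntegrable_zpow (Or.inr h0)).const_mul _
      _ = (2 * |t|)⁻¹ * (u⁻¹ - v⁻¹) := by
          rw [intervalIntegral.integral_const_mul, integral_zpow (Or.inr ⟨by norm_num, h0⟩)]
          congr 1
          norm_num
          ring
  have hsplit : ∫ s in u..v, e s = (Φ v - Φ u) + ∫ s in u..v, r s := by
    rw [← hΦ', ← intervalIntegral.integral_add]
    · simp
    · exact ((by fun_prop : Continuous e).continuousOn.sub hr_cont).intervalIntegrable
    · exact hr_cont.intervalIntegrable
  have hv : 0 < v := hu.trans_le huv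
  calc ‖∫ s in u..v, e s‖ ≤ ‖Φ v‖ + ‖Φ u‖ + ‖∫ s in u..v, r s‖ := by
        rw [hsplit]; exact (norm_add_le _ _).trans (by gcongr; exact norm_sub_le _ _)
    _ ≤ (2 * |t| * v)⁻¹ + (2 * |t| * u)⁻¹ + (2 * |t|)⁻¹ * (u⁻¹ - v⁻¹) := by
        rw [hnormΦ v hv, hnormΦ u hu]; gcongr
    _ = (|t| * u)⁻¹ := by
        field_simp
        ring

lemma norm_integral_zero_cexp_mul_sq_le {t : ℝ} (ht : t ≠ 0) (v : ℝ) :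
    ‖∫ s in 0..v, cexp ((t * s ^ 2 : ℝ) * I)‖ ≤ 2 * |t| ^ (-(1 / 2) : ℝ) := by
  set δ := |t| ^ (-(1 / 2) : ℝ)
  have hδ : 0 < δ := rpow_pos_of_pos (abs_pos.2 ht) _
  have hδ_sq : (|t| * δ)⁻¹ = δ := by
    rw [← rpow_one_add' (abs_nonneg t) (by norm_num), ← rpow_neg (abs_nonneg t)]
    congr 1
    norm_num
  have hcont : Continuous fun s : ℝ => cexp ((t * s ^ 2 : ℝ) * I) := by fun_prop
  have hnonneg : ∀ v, 0 ≤ v → ‖∫ s in 0..v, cexp ((t * s ^ 2 : ℝ) * I)‖ ≤ 2 * δ := by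
    have hshort : ∀ v, 0 ≤ v → v ≤ δ → ‖∫ s in 0..v, cexp ((t * s ^ 2 : ℝ) * I)‖ ≤ δ :=
      fun v hv0 hvδ => by
        refine (intervalIntegral.norm_integral_le_of_norm_le_const
          (C := 1) fun s _ => (norm_exp_ofReal_mul_I _).le).trans ?_
        rw [sub_zero, one_mul, abs_of_nonneg hv0]; exact hvδ
    intro v hv
    rcases le_total v δ with hvδ | hδv
    · linarith [hshort v hv hvδ]
    · rw [← intervalIntegral.integral_add_adjacent_intervals (b := δ)
        (hcont.intervalIntegrable _ _) (hcont.intervalIntegrable _ _)]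
      refine (norm_add_le _ _).trans ?_
      have := norm_integral_cexp_mul_sq_le_inv ht hδ hδv
      rw [hδ_sq] at this
      linarith [hshort δ hδ.le le_rfl]
  rcases le_total 0 v with hv | hv
  · exact hnonneg v hv
  · have hrefl : ∫ s in 0..v, cexp ((t * s ^ 2 : ℝ) * I)
        = -∫ s in 0..-v, cexp ((t * s ^ 2 : ℝ) * I) := by
      have heven : ∫ s in 0..v, cexp ((t * s ^ 2 : ℝ) * I)
          = ∫ s in 0..v, cexp ((t * (-s) ^ 2 : ℝ) * I) := by simp only [neg_sq]
      rw [heven, intervalIntegral.integral_comp_neg (fun s : ℝ => cexp ((t * s ^ 2 : ℝ) * I)),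
        neg_zero, intervalIntegral.integral_symm]
    rw [hrefl, norm_neg]
    exact hnonneg (-v) (by linarith)

lemma norm_integral_cexp_mul_sq_le {t : ℝ} (ht : t ≠ 0) (p q : ℝ) :
    ‖∫ s in p..q, cexp ((t * s ^ 2 : ℝ) * I)‖ ≤ 4 * |t| ^ (-(1 / 2) : ℝ) := by
  have hcont : Continuous fun s : ℝ => cexp ((t * s ^ 2 : ℝ) * I) := by fun_prop
  rw [← intervalIntegral.integral_interval_sub_left (hcont.intervalIntegrable 0 q)
    (hcont.intervalIntegrable 0 p)]
  linarith [norm_sub_le (∫ s in 0..q, cexp ((t * s ^ 2 : ℝ) * I))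
    (∫ s in 0..p, cexp ((t * s ^ 2 : ℝ) * I)), norm_integral_zero_cexp_mul_sq_le ht q,
    norm_integral_zero_cexp_mul_sq_le ht p]

lemma norm_integral_cexp_quadratic_le {t : ℝ} (ht : t ≠ 0) (τ p q : ℝ) :
    ‖∫ k in p..q, cexp ((t * k ^ 2 - τ * k : ℝ) * I)‖ ≤ 4 * |t| ^ (-(1 / 2) : ℝ) := by
  have hsq : ∀ k : ℝ, cexp ((t * k ^ 2 - τ * k : ℝ) * I)
      = cexp ((-(τ ^ 2 / (4 * t)) : ℝ) * I) * cexp ((t * (k - τ / (2 * t)) ^ 2 : ℝ) * I) := by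
    intro k
    rw [← Complex.exp_add]
    congr 1
    have htC : (t : ℂ) ≠ 0 := by exact_mod_cast ht
    push_cast
    field_simp
    ring
  simp_rw [hsq, intervalIntegral.integral_const_mul, norm_mul, norm_exp_ofReal_mul_I, one_mul,
    intervalIntegral.integral_comp_sub_right fun s : ℝ => cexp ((t * s ^ 2 : ℝ) * I)]
  exact norm_integral_cexp_mul_sq_le ht _ _

lemma norm_integral_Ioi_exp_mul_le {g : ℝ → ℂ} (hg : Continuous g) {x M : ℝ} (hx : 0 < x)
    (hM : ∀ v, 0 ≤ v → ‖∫ k in 0..v, g k‖ ≤ M) :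
    ‖∫ k in Ioi 0, (rexp (-x * k) : ℂ) * g k‖ ≤ M := by
  by_cases hint : IntegrableOn (fun k => (rexp (-x * k) : ℂ) * g k) (Ioi 0)
  swap
  · rw [integral_undef hint, norm_zero]
    simpa using hM 0 le_rfl
  set G : ℝ → ℂ := fun v => ∫ k in 0..v, g k
  set u : ℝ → ℂ := fun k => (rexp (-x * k) : ℂ)
  set u' : ℝ → ℂ := fun k => ((-x * rexp (-x * k) : ℝ) : ℂ)
  have hG : ∀ k, HasDerivAt G (g k) k := fun k => (hg.integral_hasStrictDerivAt 0 k).hasDerivAt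
  have hGcont : Continuous G := continuous_iff_continuousAt.2 fun k => (hG k).continuousAt
  have hu : ∀ k, HasDerivAt u (u' k) k := fun k =>
    (((hasDerivAt_id k).const_mul (-x)).exp.ofReal_comp).congr_deriv (by simp [u']; ring)
  have hbound : ∀ k ∈ Ioi (0 : ℝ), ‖u' k * G k‖ ≤ x * M * rexp (-x * k) := by
    intro k hk
    rw [norm_mul, norm_real, Real.norm_eq_abs, abs_mul, abs_neg, abs_of_pos hx,
      abs_of_pos (exp_pos _), mul_right_comm x M]
    exact mul_le_mul_of_nonneg_left (hM k hk.le) (by positivity)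
  have hu'G : IntegrableOn (u' * G) (Ioi 0) := by
    refine Integrable.mono' ((exp_neg_integrableOn_Ioi 0 hx).const_mul (x * M))
      (by fun_prop : Continuous (u' * G)).aestronglyMeasurable ?_
    exact (ae_restrict_iff' measurableSet_Ioi).2 (Eventually.of_forall hbound)
  have h_zero : Tendsto (u * G) (𝓝[>] 0) (𝓝 0) := by
    have : (u * G) 0 = 0 := by simp [G]
    rw [← this]
    exact ((by fun_prop : Continuous (u * G)).tendsto 0).mono_left nhdsWithin_le_nhds
  have h_infty : Tendsto (u * G) atTop (𝓝 0) := by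
    have hexp : Tendsto (fun k => M * rexp (-x * k)) atTop (𝓝 0) := by
      simpa using ((tendsto_exp_neg_atTop_nhds_zero.comp
        (tendsto_id.const_mul_atTop hx)).const_mul M)
    refine squeeze_zero_norm' ?_ hexp
    filter_upwards [eventually_ge_atTop 0] with k hk
    rw [Pi.mul_apply, norm_mul, norm_real, Real.norm_eq_abs, abs_of_pos (exp_pos _), mul_comm]
    exact mul_le_mul_of_nonneg_right (hM k hk) (exp_pos _).le
  rw [integral_Ioi_mul_deriv_eq_deriv_mul (fun k _ => hu k) (fun k _ => hG k) hint hu'G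
    h_zero h_infty, sub_zero, zero_sub, norm_neg]
  calc ‖∫ k in Ioi 0, u' k * G k‖ ≤ ∫ k in Ioi 0, x * M * rexp (-x * k) :=
        norm_integral_le_of_norm_le ((exp_neg_integrableOn_Ioi 0 hx).const_mul (x * M))
          ((ae_restrict_iff' measurableSet_Ioi).2 (Eventually.of_forall hbound))
    _ = M * ∫ k in Ioi 0, x * rexp (-x * k) := by
        rw [← integral_const_mul]; congr 1; ext k; ring
    _ = M := by
        rw [integral_const_mul, integral_exp_mul_Ioi (neg_lt_zero.2 hx), mul_zero, Real.exp_zero]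
        field_simp

lemma uOne_eq_integral_kernel_mul {h : ℝ → ℂ} (hh : Integrable h) {x : ℝ} (hx : 0 < x) (t : ℝ) :
    uOne h x t = ∫ τ, (∫ k in Ioi 0, (rexp (-x * k) : ℂ) * cexp ((t * k ^ 2 - τ * k : ℝ) * I))
      * h τ := by
  set F : ℝ → ℝ → ℂ := fun k τ => (rexp (-x * k) : ℂ) * cexp ((t * k ^ 2 - τ * k : ℝ) * I) * h τ
  have hF : Integrable (Function.uncurry F) ((volume.restrict (Ioi 0)).prod volume) := by
    refine ((exp_neg_integrableOn_Ioi 0 hx).mul_prod hh.norm).mono' ?_ ?_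
    · exact ((by fun_prop : Continuous fun p : ℝ × ℝ =>
        (rexp (-x * p.1) : ℂ) * cexp ((t * p.1 ^ 2 - p.2 * p.1 : ℝ) * I)).aestronglyMeasurable.mul
        hh.aestronglyMeasurable.comp_snd)
    · refine Eventually.of_forall fun ⟨k, τ⟩ => ?_
      simp only [Function.uncurry_apply_pair, F, norm_mul, norm_real, norm_exp_ofReal_mul_I,
        Real.norm_eq_abs, abs_of_pos (exp_pos _), mul_one, le_refl]
  have hinner : ∀ k : ℝ, cexp (-(k : ℂ) * x + I * k ^ 2 * t) * fourierT h k = ∫ τ, F k τ := by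
    intro k
    rw [fourierT, ← integral_const_mul]
    congr 1; ext τ
    simp only [F, ← mul_assoc, ofReal_exp, ← Complex.exp_add]
    congr 2
    push_cast
    ring
  simp_rw [uOne, hinner, integral_integral_swap hF, F, integral_mul_const]

lemma fourierT_eq_fourier (h : ℝ → ℂ) (k : ℝ) : fourierT h k = 𝓕 h (k / (2 * π)) := by
  rw [Real.fourier_real_eq_integral_exp_smul, fourierT]
  congr 1; ext τ
  rw [smul_eq_mul]
  congr 2
  have hπ : (π : ℂ) ≠ 0 := by exact_mod_cast Real.pi_ne_zero
  push_cast
  field_simp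

lemma integrable_fourierT (H : SchwartzMap ℝ ℂ) : Integrable (fourierT fun τ => H τ) := by
  have : (fourierT fun τ => H τ) = fun k => (𝓕 H : SchwartzMap ℝ ℂ) (k / (2 * π)) := by
    ext k; rw [fourierT_eq_fourier, SchwartzMap.fourier_coe]
  rw [this]
  exact (SchwartzMap.integrable _).comp_div (by positivity)

lemma continuousOn_uOne {h : ℝ → ℂ} (hh : Integrable (fourierT h)) (t : ℝ) :
    ContinuousOn (fun x => uOne h x t) (Ici 0) := by
  refine continuousOn_of_dominated (bound := fun k => ‖fourierT h k‖) (fun x _ => ?_)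
    (fun x hx => ?_) hh.norm.restrict (Eventually.of_forall fun k => by fun_prop)
  · have hexp : Continuous fun k : ℝ => cexp (-(k : ℂ) * x + I * k ^ 2 * t) := by fun_prop
    exact (hexp.aestronglyMeasurable.mul hh.aestronglyMeasurable).restrict
  · refine (ae_restrict_iff' measurableSet_Ioi).2 (Eventually.of_forall fun k (hk : 0 < k) => ?_)
    rw [norm_mul]
    refine mul_le_of_le_one_left (norm_nonneg _) ?_
    rw [Complex.norm_exp, exp_le_one_iff]
    simpa [← ofReal_pow] using mul_nonneg hk.le hx

lemma norm_uOne_le_of_pos {h : ℝ → ℂ} (hh : Integrable h) {t x : ℝ} (ht : t ≠ 0) (hx : 0 < x) :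
    ‖uOne h x t‖ ≤ 4 * |t| ^ (-(1 / 2) : ℝ) * ∫ τ, ‖h τ‖ := by
  have hkernel : ∀ τ : ℝ,
      ‖∫ k in Ioi 0, (rexp (-x * k) : ℂ) * cexp ((t * k ^ 2 - τ * k : ℝ) * I)‖
        ≤ 4 * |t| ^ (-(1 / 2) : ℝ) := fun τ =>
    norm_integral_Ioi_exp_mul_le (by fun_prop) hx
      fun v _ => norm_integral_cexp_quadratic_le ht τ 0 v
  rw [uOne_eq_integral_kernel_mul hh hx, ← integral_const_mul]
  exact norm_integral_le_of_norm_le (hh.norm.const_mul _) (Eventually.of_forall fun τ => by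
    rw [norm_mul]; exact mul_le_mul_of_nonneg_right (hkernel τ) (norm_nonneg _))

/-- The `L¹ → L^∞` dispersive estimate: for Schwartz `H₁` whose Fourier transform vanishes
on `(−∞,0)`, one has `sup_{x ≥ 0} |u₁(x,t)| ≤ c |t|^{−1/2} ‖H₁‖_{L¹(ℝ)}` for `t ≠ 0`. -/
theorem uOne_dispersive_estimate :
    ∃ c : ℝ, 0 < c ∧ ∀ H₁ : SchwartzMap ℝ ℂ,
      (∀ k : ℝ, k < 0 → fourierT (fun τ => H₁ τ) k = 0) →
      ∀ t : ℝ, t ≠ 0 → ∀ x : ℝ, 0 ≤ x →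
        ‖uOne (fun τ => H₁ τ) x t‖ ≤ c * |t| ^ (-(1 / 2) : ℝ) * ∫ τ : ℝ, ‖H₁ τ‖ := by
  refine ⟨4, by norm_num, fun H _ t ht x hx => ?_⟩
  have hpos : ∀ x > 0, ‖uOne (fun τ => H τ) x t‖ ≤ 4 * |t| ^ (-(1 / 2) : ℝ) * ∫ τ, ‖H τ‖ :=
    fun x hx => norm_uOne_le_of_pos H.integrable ht hx
  rcases hx.eq_or_lt with rfl | hx
  · have hcont := (continuousOn_uOne (integrable_fourierT H) t).continuousWithinAt self_mem_Ici
    exact le_of_tendsto (hcont.mono Ioi_subset_Ici_self).tendsto.norm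
      (eventually_nhdsWithin_of_forall hpos)
  · exact hpos x hx
end
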